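/- Under the biproduct hypotheses with antipodes, the map S(b⋆h) = Σ (S_H(b₍₋₁₎h))₁ · S_B(b₍₀₎) ⋆ (S_H(b₍₋₁₎h))₂ satisfies the left antipode identity: Σ S((b⋆h)₁)(b⋆h)₂ = ε_B(b)ε_H(h) 1_B⋆1_H in B ⋆ H. -/
import Mathlib


open TensorProduct

noncomputable section

/-- The smash product multiplication on `B ⊗ H`, sending
`(a ⊗ g) ⊗ (b ⊗ h)` to `Σ a (g₁ · b) ⊗ g₂ h`. -/
def smashMul (k : Type*) {H B : Type*} [Field k] [Semiring H] [Bialgebra k H]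
    [Ring B] [Algebra k B] (α : H →ₗ[k] B →ₗ[k] B) :
    ((B ⊗[k] H) ⊗[k] (B ⊗[k] H)) →ₗ[k] B ⊗[k] H :=
  (TensorProduct.map
      ((LinearMap.mul' k B) ∘ₗ (TensorProduct.map LinearMap.id (TensorProduct.lift α))
        ∘ₗ (TensorProduct.assoc k B H B).toLinearMap)
      (LinearMap.mul' k H))
    ∘ₗ (TensorProduct.tensorTensorTensorComm k (B ⊗[k] H) H B H).toLinearMap
    ∘ₗ (TensorProduct.map (TensorProduct.assoc k B H H).symm.toLinearMap LinearMap.id)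
    ∘ₗ (TensorProduct.map (TensorProduct.map LinearMap.id Coalgebra.comul) LinearMap.id)

/-- The smash coproduct comultiplication on `B ⊗ H`, sending
`b ⊗ h` to `Σ b₁ ⊗ (b₂)₍₋₁₎ h₁ ⊗ ((b₂)₍₀₎ ⊗ h₂)`. -/
def smashComul (k : Type*) {H B : Type*} [Field k] [Semiring H] [Bialgebra k H]
    [AddCommGroup B] [Module k B] [Coalgebra k B] (ρ : B →ₗ[k] H ⊗[k] B) :
    (B ⊗[k] H) →ₗ[k] ((B ⊗[k] H) ⊗[k] (B ⊗[k] H)) :=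
  (TensorProduct.map
      ((TensorProduct.map LinearMap.id (LinearMap.mul' k H))
        ∘ₗ (TensorProduct.assoc k B H H).toLinearMap)
      LinearMap.id)
  ∘ₗ (TensorProduct.tensorTensorTensorComm k (B ⊗[k] H) B H H).toLinearMap
  ∘ₗ (TensorProduct.map
        ((TensorProduct.assoc k B H B).symm.toLinearMap
          ∘ₗ (TensorProduct.map LinearMap.id ρ))
        LinearMap.id)
  ∘ₗ (TensorProduct.map Coalgebra.comul Coalgebra.comul)

/-- The counit `ε(b ⊗ h) = ε_B(b) ε_H(h)` of the smash coproduct. -/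
def smashCounit (k : Type*) {H B : Type*} [Field k] [Semiring H] [Bialgebra k H]
    [AddCommGroup B] [Module k B] [Coalgebra k B] :
    (B ⊗[k] H) →ₗ[k] k :=
  (LinearMap.mul' k k) ∘ₗ (TensorProduct.map Coalgebra.counit Coalgebra.counit)

/-- The antipode of the Radford biproduct `B ⋆ H`, sending `b ⊗ h` to
`Σ (S_H(b₍₋₁₎ h))₁ · S_B(b₍₀₎) ⊗ (S_H(b₍₋₁₎ h))₂`. -/
def biproductAntipode (k : Type*) {H B : Type*} [Field k] [Semiring H] [HopfAlgebra k H]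
    [Ring B] [Algebra k B]
    (α : H →ₗ[k] B →ₗ[k] B) (ρ : B →ₗ[k] H ⊗[k] B) (SB : B →ₗ[k] B) :
    (B ⊗[k] H) →ₗ[k] (B ⊗[k] H) :=
  (TensorProduct.map (TensorProduct.lift α) LinearMap.id)
  ∘ₗ (TensorProduct.assoc k H B H).symm.toLinearMap
  ∘ₗ (TensorProduct.map LinearMap.id (TensorProduct.comm k H B).toLinearMap)
  ∘ₗ (TensorProduct.assoc k H H B).toLinearMap
  ∘ₗ (TensorProduct.map Coalgebra.comul LinearMap.id)
  ∘ₗ (TensorProduct.map (HopfAlgebra.antipode (R := k)) SB)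
  ∘ₗ (TensorProduct.map (LinearMap.mul' k H) LinearMap.id)
  ∘ₗ (TensorProduct.assoc k H H B).symm.toLinearMap
  ∘ₗ (TensorProduct.map LinearMap.id (TensorProduct.comm k B H).toLinearMap)
  ∘ₗ (TensorProduct.assoc k H B H).toLinearMap
  ∘ₗ (TensorProduct.map ρ LinearMap.id)
set_option maxHeartbeats 1000000
set_option synthInstance.maxHeartbeats 400000
section Aux

variable (k : Type*) {H B : Type*} [Field k] [Semiring H] [HopfAlgebra k H]
    [Ring B] [Algebra k B] [Coalgebra k B]
    (α : H →ₗ[k] B →ₗ[k] B) (ρ : B →ₗ[k] H ⊗[k] B) (SB : B →ₗ[k] B)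

/-- `auxX l (z ⊗ u) = Σ (u₁ · z) ⊗ u₂ l`. -/
def auxX (l : H) : (B ⊗[k] H) →ₗ[k] (B ⊗[k] H) :=
  (TensorProduct.map (TensorProduct.lift α ∘ₗ (TensorProduct.comm k B H).toLinearMap)
      (LinearMap.mulRight k l))
  ∘ₗ (TensorProduct.assoc k B H H).symm.toLinearMap
  ∘ₗ (TensorProduct.map LinearMap.id Coalgebra.comul)

lemma auxX_tmul (l : H) (z : B) (u : H) :
    auxX k α l (z ⊗ₜ[k] u)
      = TensorProduct.map (α.flip z) (LinearMap.mulRight k l) (Coalgebra.comul u) := by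
  unfold auxX
  simp only [LinearMap.comp_apply, TensorProduct.map_tmul, LinearMap.id_coe, id_eq,
    LinearEquiv.coe_coe]
  generalize Coalgebra.comul (R := k) u = w
  induction w using TensorProduct.induction_on with
  | zero => simp
  | tmul u1 u2 =>
      simp [TensorProduct.assoc_symm_tmul, TensorProduct.map_tmul, TensorProduct.comm_tmul,
        TensorProduct.lift.tmul]
  | add x y hx hy => simp [tmul_add, map_add, hx, hy]

lemma auxX_one (hma1 : ∀ h : H, α h (1 : B) = Coalgebra.counit (R := k) h • (1 : B))
    (l : H) (u : H) :
    auxX k α l ((1 : B) ⊗ₜ[k] u) = (1 : B) ⊗ₜ[k] (u * l) := by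
  rw [auxX_tmul]
  have h1 : α.flip (1 : B)
      = LinearMap.toSpanSingleton k B 1 ∘ₗ (Coalgebra.counit : H →ₗ[k] k) :=
    LinearMap.ext fun u => by simpa using hma1 u
  have h2 : (LinearMap.mulRight k l : H →ₗ[k] H)
      = LinearMap.mulRight k l ∘ₗ LinearMap.id := rfl
  rw [h1, h2, TensorProduct.map_comp, LinearMap.comp_apply]
  have h3 : (TensorProduct.map (Coalgebra.counit : H →ₗ[k] k) LinearMap.id)
        (Coalgebra.comul (R := k) u)
      = (1 : k) ⊗ₜ[k] u := Coalgebra.rTensor_counit_comul (R := k) u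
  rw [h3]
  simp
set_option linter.unusedSectionVars false

/-- `auxD a g l (r ⊗ w) = (a ⊗ r g) ⊗ (w ⊗ l)`. -/
def auxD (a : B) (g l : H) : (H ⊗[k] B) →ₗ[k] ((B ⊗[k] H) ⊗[k] (B ⊗[k] H)) :=
  TensorProduct.map ((TensorProduct.mk k B H a) ∘ₗ LinearMap.mulRight k g)
    ((TensorProduct.mk k B H).flip l)

/-- `auxN c g l (e ⊗ d) = auxX l ((S_B d · c) ⊗ S_H (e g))`. -/
def auxN (c : B) (g l : H) : (H ⊗[k] B) →ₗ[k] (B ⊗[k] H) :=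
  auxX k α l ∘ₗ (TensorProduct.comm k H B).toLinearMap
  ∘ₗ TensorProduct.map (HopfAlgebra.antipode (R := k) ∘ₗ LinearMap.mulRight k g)
      (LinearMap.mulRight k c ∘ₗ SB)

/-- `auxK ((e ⊗ d) ⊗ (r ⊗ w)) = (e r) ⊗ (d ⊗ w)`. -/
def auxK : ((H ⊗[k] B) ⊗[k] (H ⊗[k] B)) →ₗ[k] (H ⊗[k] (B ⊗[k] B)) :=
  TensorProduct.map (LinearMap.mul' k H) LinearMap.id
  ∘ₗ (TensorProduct.tensorTensorTensorComm k H B H B).toLinearMap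

/-- `auxW g l (G ⊗ (d ⊗ w)) = auxX l ((S_B d · w) ⊗ S_H (G g))`. -/
def auxW (g l : H) : (H ⊗[k] (B ⊗[k] B)) →ₗ[k] (B ⊗[k] H) :=
  auxX k α l ∘ₗ (TensorProduct.comm k H B).toLinearMap
  ∘ₗ TensorProduct.map (HopfAlgebra.antipode (R := k) ∘ₗ LinearMap.mulRight k g)
      (LinearMap.mul' k B ∘ₗ TensorProduct.map SB LinearMap.id)

/-- `auxV g l (e ⊗ f) = ε_B f • (1 ⊗ S_H(e g) l)`. -/
def auxV (g l : H) : (H ⊗[k] B) →ₗ[k] (B ⊗[k] H) :=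
  TensorProduct.mk k B H 1 ∘ₗ LinearMap.mulRight k l ∘ₗ HopfAlgebra.antipode (R := k)
  ∘ₗ LinearMap.mulRight k g ∘ₗ (TensorProduct.rid k H).toLinearMap
  ∘ₗ TensorProduct.map LinearMap.id Coalgebra.counit

lemma smashMul_tmul (a : B) (g : H) (c : B) (l : H) :
    smashMul k α ((a ⊗ₜ[k] g) ⊗ₜ[k] (c ⊗ₜ[k] l))
      = TensorProduct.map (LinearMap.mulLeft k a ∘ₗ α.flip c) (LinearMap.mulRight k l)
          (Coalgebra.comul g) := by
  unfold smashMul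
  simp only [LinearMap.comp_apply, TensorProduct.map_tmul, LinearMap.id_coe, id_eq,
    LinearEquiv.coe_coe]
  generalize Coalgebra.comul (R := k) g = w
  induction w using TensorProduct.induction_on with
  | zero => simp
  | tmul g1 g2 =>
      simp [TensorProduct.assoc_symm_tmul, TensorProduct.tensorTensorTensorComm_tmul,
        TensorProduct.assoc_tmul, TensorProduct.lift.tmul]
  | add x y hx hy => simp only [tmul_add, add_tmul, map_add, hx, hy]

lemma lemA
    (hma : ∀ (h : H) (a b : B),
      α h (a * b) =
        LinearMap.mul' k B (TensorProduct.map (α.flip a) (α.flip b) (Coalgebra.comul h)))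
    (a c : B) (g l : H) :
    smashMul k α ((biproductAntipode k α ρ SB (a ⊗ₜ[k] g)) ⊗ₜ[k] (c ⊗ₜ[k] l))
      = auxN k α SB c g l (ρ a) := by
  have hflip : ∀ x y : B, (α.flip (x * y) : H →ₗ[k] B)
      = (LinearMap.mul' k B ∘ₗ TensorProduct.map (α.flip x) (α.flip y)) ∘ₗ Coalgebra.comul :=
    fun x y => LinearMap.ext fun u => by simpa using hma u x y
  unfold biproductAntipode
  simp only [LinearMap.comp_apply, TensorProduct.map_tmul, LinearMap.id_coe, id_eq,
    LinearEquiv.coe_coe]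
  generalize ρ a = z
  induction z using TensorProduct.induction_on with
  | zero => simp [auxN]
  | add x y hx hy =>
      simp only [add_tmul, map_add, hx, hy]
  | tmul e d =>
      simp only [TensorProduct.assoc_tmul, TensorProduct.map_tmul, TensorProduct.comm_tmul,
        TensorProduct.assoc_symm_tmul, LinearMap.mul'_apply, LinearMap.id_coe, id_eq,
        LinearEquiv.coe_coe]
      -- right-hand side
      rw [show auxN k α SB c g l (e ⊗ₜ[k] d)
            = auxX k α l ((SB d * c) ⊗ₜ[k] (HopfAlgebra.antipode (R := k) (e * g))) by
          simp [auxN]]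
      rw [auxX_tmul, hflip (SB d) c,
        show (LinearMap.mulRight k l : H →ₗ[k] H) = LinearMap.mulRight k l ∘ₗ LinearMap.id
          from rfl,
        TensorProduct.map_comp]
      set U := HopfAlgebra.antipode (R := k) (e * g) with hU
      have hco : TensorProduct.map (Coalgebra.comul) LinearMap.id (Coalgebra.comul (R := k) U)
          = (TensorProduct.assoc k H H H).symm
              (TensorProduct.map LinearMap.id Coalgebra.comul (Coalgebra.comul (R := k) U)) := by
        have := Coalgebra.coassoc_symm_apply (R := k) U
        simp only [LinearMap.rTensor, LinearMap.lTensor] at this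
        exact this.symm
      rw [LinearMap.comp_apply, hco]
      generalize Coalgebra.comul (R := k) U = w
      induction w using TensorProduct.induction_on with
      | zero => simp
      | add x y hx hy => simp only [add_tmul, tmul_add, map_add, hx, hy]
      | tmul u1 u2 =>
          simp only [TensorProduct.assoc_tmul, TensorProduct.map_tmul, TensorProduct.comm_tmul,
            TensorProduct.assoc_symm_tmul, LinearMap.id_coe, id_eq, LinearEquiv.coe_coe,
            TensorProduct.lift.tmul]
          rw [smashMul_tmul]
          generalize Coalgebra.comul (R := k) u2 = v
          induction v using TensorProduct.induction_on with
          | zero => simp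
          | add x y hx hy => simp only [tmul_add, map_add, hx, hy]
          | tmul v1 v2 =>
              simp [TensorProduct.assoc_symm_tmul, TensorProduct.lift.tmul]

lemma smashComul_eval (b : B) (h : H) (sb : Finset (B × B)) (sh : Finset (H × H))
    (hb : Coalgebra.comul (R := k) b = ∑ i ∈ sb, i.1 ⊗ₜ[k] i.2)
    (hh : Coalgebra.comul (R := k) h = ∑ j ∈ sh, j.1 ⊗ₜ[k] j.2) :
    smashComul k ρ (b ⊗ₜ[k] h)
      = ∑ i ∈ sb, ∑ j ∈ sh, auxD k i.1 j.1 j.2 (ρ i.2) := by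
  unfold smashComul
  simp only [LinearMap.comp_apply, TensorProduct.map_tmul, LinearMap.id_coe, id_eq,
    LinearEquiv.coe_coe]
  rw [hb, hh]
  simp only [map_sum, TensorProduct.sum_tmul, TensorProduct.tmul_sum, TensorProduct.map_tmul,
    LinearMap.id_coe, id_eq]
  rw [Finset.sum_comm]
  refine Finset.sum_congr rfl fun i _ => Finset.sum_congr rfl fun j _ => ?_
  generalize ρ i.2 = z
  induction z using TensorProduct.induction_on with
  | zero => simp [auxD]
  | add x y hx hy => simp only [tmul_add, add_tmul, map_add, hx, hy]
  | tmul p1 p2 =>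
      simp [auxD, TensorProduct.assoc_symm_tmul, TensorProduct.tensorTensorTensorComm_tmul,
        TensorProduct.assoc_tmul]

lemma lemC
    (hma : ∀ (h : H) (a b : B),
      α h (a * b) =
        LinearMap.mul' k B (TensorProduct.map (α.flip a) (α.flip b) (Coalgebra.comul h)))
    (a : B) (g l : H) (z : H ⊗[k] B) :
    smashMul k α ((TensorProduct.map (biproductAntipode k α ρ SB) LinearMap.id)
        (auxD k a g l z))
      = auxW k α SB g l (auxK k ((ρ a) ⊗ₜ[k] z)) := by
  induction z using TensorProduct.induction_on with
  | zero => simp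
  | add x y hx hy => simp only [map_add, tmul_add, hx, hy]
  | tmul r w =>
      rw [show auxD k a g l (r ⊗ₜ[k] w) = (a ⊗ₜ[k] (r * g)) ⊗ₜ[k] (w ⊗ₜ[k] l) by simp [auxD]]
      rw [TensorProduct.map_tmul]
      simp only [LinearMap.id_coe, id_eq]
      rw [lemA k α ρ SB hma]
      generalize ρ a = y
      induction y using TensorProduct.induction_on with
      | zero => simp
      | add x y hx hy => simp only [map_add, add_tmul, hx, hy]
      | tmul e d =>
          simp [auxN, auxW, auxK, TensorProduct.tensorTensorTensorComm_tmul, mul_assoc]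

lemma lemD
    (hma1 : ∀ h : H, α h (1 : B) = Coalgebra.counit (R := k) h • (1 : B))
    (hSB_left : ∀ b : B,
      LinearMap.mul' k B ((TensorProduct.map SB LinearMap.id) (Coalgebra.comul b))
        = Coalgebra.counit (R := k) b • (1 : B))
    (g l : H) (z : H ⊗[k] B) :
    auxW k α SB g l ((TensorProduct.map LinearMap.id Coalgebra.comul) z)
      = auxV k g l z := by
  induction z using TensorProduct.induction_on with
  | zero => simp
  | add x y hx hy => simp only [map_add, hx, hy]
  | tmul e f =>
      rw [TensorProduct.map_tmul]
      simp only [LinearMap.id_coe, id_eq]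
      have h1 : auxW k α SB g l ((e : H) ⊗ₜ[k] (Coalgebra.comul (R := k) f))
          = Coalgebra.counit (R := k) f • auxX k α l ((1 : B) ⊗ₜ[k]
              (HopfAlgebra.antipode (R := k) (e * g))) := by
        unfold auxW
        simp only [LinearMap.comp_apply, TensorProduct.map_tmul, LinearEquiv.coe_coe,
          LinearMap.mulRight_apply]
        rw [hSB_left f]
        simp [TensorProduct.comm_tmul]
      rw [h1, auxX_one k α hma1]
      simp [auxV, TensorProduct.rid_tmul, TensorProduct.smul_tmul', TensorProduct.tmul_smul]

end Aux


/-- `S` satisfies the left antipode identity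
`Σ S((b⋆h)₁)(b⋆h)₂ = ε_B(b)ε_H(h) 1_B ⋆ 1_H`. -/
theorem biproduct_antipode_left
    (k H B : Type*) [Field k] [Semiring H] [HopfAlgebra k H]
    [Ring B] [Algebra k B] [Coalgebra k B]
    (α : H →ₗ[k] B →ₗ[k] B) (ρ : B →ₗ[k] H ⊗[k] B)
    -- `B` is a left `H`-module
    (hα_one : ∀ b : B, α 1 b = b)
    (hα_mul : ∀ (g h : H) (b : B), α (g * h) b = α g (α h b))
    -- `B` is a left `H`-module algebra
    (hma : ∀ (h : H) (a b : B),
      α h (a * b) =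
        LinearMap.mul' k B (TensorProduct.map (α.flip a) (α.flip b) (Coalgebra.comul h)))
    (hma1 : ∀ h : H, α h (1 : B) = Coalgebra.counit (R := k) h • (1 : B))
    -- `B` is a left `H`-module coalgebra
    (hmc : ∀ (h : H) (b : B),
      Coalgebra.comul (R := k) (α h b) =
        (TensorProduct.map (TensorProduct.lift α) (TensorProduct.lift α))
          ((TensorProduct.tensorTensorTensorComm k H H B B)
            (Coalgebra.comul h ⊗ₜ[k] Coalgebra.comul b)))
    (hmcε : ∀ (h : H) (b : B),
      Coalgebra.counit (R := k) (α h b)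
        = Coalgebra.counit (R := k) h * Coalgebra.counit (R := k) b)
    -- `B` is a left `H`-comodule
    (hρ_coassoc : (TensorProduct.assoc k H H B).toLinearMap
        ∘ₗ (TensorProduct.map Coalgebra.comul LinearMap.id) ∘ₗ ρ
      = (TensorProduct.map LinearMap.id ρ) ∘ₗ ρ)
    (hρ_counit : (TensorProduct.lid k B).toLinearMap
        ∘ₗ (TensorProduct.map Coalgebra.counit LinearMap.id) ∘ₗ ρ = LinearMap.id)
    -- `B` is a left `H`-comodule algebra
    (hca : ∀ a b : B,
      ρ (a * b) = (TensorProduct.map (LinearMap.mul' k H) (LinearMap.mul' k B))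
        ((TensorProduct.tensorTensorTensorComm k H B H B) (ρ a ⊗ₜ[k] ρ b)))
    (hca1 : ρ (1 : B) = (1 : H) ⊗ₜ[k] (1 : B))
    -- `B` is a left `H`-comodule coalgebra
    (hcc : ∀ b : B,
      (TensorProduct.map LinearMap.id Coalgebra.comul) (ρ b)
        = (TensorProduct.map (LinearMap.mul' k H) LinearMap.id)
            ((TensorProduct.tensorTensorTensorComm k H B H B)
              ((TensorProduct.map ρ ρ) (Coalgebra.comul b))))
    (hccε : ∀ b : B,
      (TensorProduct.rid k H) ((TensorProduct.map LinearMap.id Coalgebra.counit) (ρ b))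
        = Coalgebra.counit (R := k) b • (1 : H))
    -- `ε_B` is an algebra map
    (hεB_mul : ∀ a b : B,
      Coalgebra.counit (R := k) (a * b)
        = Coalgebra.counit (R := k) a * Coalgebra.counit (R := k) b)
    (hεB_one : Coalgebra.counit (R := k) (1 : B) = 1)
    -- `Δ_B 1 = 1 ⊗ 1`
    (hΔ1 : Coalgebra.comul (R := k) (1 : B) = (1 : B) ⊗ₜ[k] (1 : B))
    -- the twisted comultiplication condition (1) of Radford's theorem:
    -- `Δ_B(ab) = Σ a₁ ((a₂)₍₋₁₎ · b₁) ⊗ (a₂)₍₀₎ b₂`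
    (htw : ∀ a b : B,
      Coalgebra.comul (R := k) (a * b) =
        (TensorProduct.map
            ((LinearMap.mul' k B)
              ∘ₗ (TensorProduct.map LinearMap.id (TensorProduct.lift α))
              ∘ₗ (TensorProduct.assoc k B H B).toLinearMap)
            (LinearMap.mul' k B))
          ((TensorProduct.tensorTensorTensorComm k (B ⊗[k] H) B B B)
            ((TensorProduct.map
                ((TensorProduct.assoc k B H B).symm.toLinearMap
                  ∘ₗ (TensorProduct.map LinearMap.id ρ))
                LinearMap.id)
              (Coalgebra.comul a ⊗ₜ[k] Coalgebra.comul b))))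
    -- the Yetter–Drinfeld condition (2) of Radford's theorem:
    -- `Σ h₁ b₍₋₁₎ ⊗ h₂ · b₍₀₎ = Σ (h₁·b)₍₋₁₎ h₂ ⊗ (h₁·b)₍₀₎`
    (hYD : ∀ (h : H) (b : B),
      (TensorProduct.map (LinearMap.mul' k H) (TensorProduct.lift α))
          ((TensorProduct.tensorTensorTensorComm k H H H B)
            (Coalgebra.comul h ⊗ₜ[k] ρ b))
        = ((TensorProduct.map (LinearMap.mul' k H) LinearMap.id)
            ∘ₗ (TensorProduct.assoc k H H B).symm.toLinearMap
            ∘ₗ (TensorProduct.map LinearMap.id (TensorProduct.comm k B H).toLinearMap)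
            ∘ₗ (TensorProduct.assoc k H B H).toLinearMap
            ∘ₗ (TensorProduct.map (ρ ∘ₗ α.flip b) LinearMap.id))
          (Coalgebra.comul h))
    (SB : B →ₗ[k] B)
    -- `S_B` is an antipode for the braided Hopf algebra `B`:
    -- `Σ S_B(b₁) b₂ = ε_B(b) 1_B = Σ b₁ S_B(b₂)`
    (hSB_left : ∀ b : B,
      LinearMap.mul' k B ((TensorProduct.map SB LinearMap.id) (Coalgebra.comul b))
        = Coalgebra.counit (R := k) b • (1 : B))
    (hSB_right : ∀ b : B,
      LinearMap.mul' k B ((TensorProduct.map LinearMap.id SB) (Coalgebra.comul b))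
        = Coalgebra.counit (R := k) b • (1 : B))
    :
    ∀ (b : B) (h : H),
      smashMul k α
        ((TensorProduct.map (biproductAntipode k α ρ SB) LinearMap.id)
          (smashComul k ρ (b ⊗ₜ[k] h)))
      = (Coalgebra.counit (R := k) b * Coalgebra.counit (R := k) h)
          • ((1 : B) ⊗ₜ[k] (1 : H)) := by
  intro b h
  obtain ⟨sb, hb⟩ := TensorProduct.exists_finset (Coalgebra.comul (R := k) b)
  obtain ⟨sh, hh⟩ := TensorProduct.exists_finset (Coalgebra.comul (R := k) h)
  rw [smashComul_eval k ρ b h sb sh hb hh]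
  simp only [map_sum]
  rw [Finset.sum_comm]
  have hfold : ∑ i ∈ sb, (ρ i.1) ⊗ₜ[k] (ρ i.2)
      = TensorProduct.map ρ ρ (Coalgebra.comul (R := k) b) := by
    rw [hb, map_sum]; simp [TensorProduct.map_tmul]
  have hK : auxK k (TensorProduct.map ρ ρ (Coalgebra.comul (R := k) b))
      = TensorProduct.map LinearMap.id Coalgebra.comul (ρ b) := by
    have h2 := hcc b
    unfold auxK
    rw [LinearMap.comp_apply]
    exact h2.symm
  have hV : ∀ g l : H, auxV k g l (ρ b)
      = Coalgebra.counit (R := k) b •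
          ((1 : B) ⊗ₜ[k] (HopfAlgebra.antipode (R := k) g * l)) := by
    intro g l
    unfold auxV
    simp only [LinearMap.comp_apply, LinearEquiv.coe_coe]
    rw [hccε b]
    simp [one_mul, TensorProduct.tmul_smul]
  have e1 : ∀ j ∈ sh, (∑ i ∈ sb,
      smashMul k α ((TensorProduct.map (biproductAntipode k α ρ SB) LinearMap.id)
        (auxD k i.1 j.1 j.2 (ρ i.2))))
      = Coalgebra.counit (R := k) b •
          ((1 : B) ⊗ₜ[k] (HopfAlgebra.antipode (R := k) j.1 * j.2)) := by
    intro j _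
    rw [Finset.sum_congr rfl fun i _ => lemC k α ρ SB hma i.1 j.1 j.2 (ρ i.2)]
    rw [← map_sum, ← map_sum, hfold, hK, lemD k α SB hma1 hSB_left, hV]
  rw [Finset.sum_congr rfl e1]
  have hant : ∑ j ∈ sh, HopfAlgebra.antipode (R := k) j.1 * j.2
      = Coalgebra.counit (R := k) h • (1 : H) := by
    have h3 := HopfAlgebra.mul_antipode_rTensor_comul_apply (R := k) h
    rw [hh] at h3
    simp only [map_sum, LinearMap.rTensor_tmul, LinearMap.mul'_apply] at h3
    rw [h3, Algebra.smul_def, mul_one]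
  rw [← Finset.smul_sum, ← TensorProduct.tmul_sum, hant, TensorProduct.tmul_smul, smul_smul]
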